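/- arXiv:2407.21134 — 3 statements merged into one kernel-verified Lean document; each statement's English description precedes it below -/
import Mathlib

section
/- Let (s_1, ρ_1), …, (s_n, ρ_n) be pairs of positive real numbers with ρ_1 ≥ ρ_2 ≥ … ≥ ρ_n. Let j_1, …, j_k be distinct indices in {1,…,n}, and suppose r ∈ {1,…,n} satisfies ∑_{i=1}^{r-1} s_i < ∑_{i=1}^k s_{j_i} ≤ ∑_{i=1}^r s_i. Then ∑_{i=1}^r s_i ρ_i ≥ ∑_{i=1}^k s_{j_i} ρ_{j_i}. -/
/-! Exchange argument: only the items in the symmetric difference of `J` and the greedy prefix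
`{1, …, r}` matter. Those chosen outside the prefix have density at most `ρ r`, those of the prefix
left out have density at least `ρ r`, and the former weigh no more in storage than the latter. -/

open Finset

theorem Finset.sum_mul_le_sum_mul_of_le_threshold_le {ι : Type*} [DecidableEq ι]
    {A B : Finset ι} {s ρ : ι → ℝ} {t : ℝ} (ht : 0 ≤ t)
    (hsA : ∀ i ∈ A \ B, 0 ≤ s i) (hsB : ∀ i ∈ B \ A, 0 ≤ s i)
    (hρA : ∀ i ∈ A \ B, ρ i ≤ t) (hρB : ∀ i ∈ B \ A, t ≤ ρ i)
    (hsum : ∑ i ∈ A, s i ≤ ∑ i ∈ B, s i) :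
    ∑ i ∈ A, s i * ρ i ≤ ∑ i ∈ B, s i * ρ i := by
  rw [← sum_sdiff_le_sum_sdiff] at hsum ⊢
  calc ∑ i ∈ A \ B, s i * ρ i
      ≤ ∑ i ∈ A \ B, s i * t :=
        sum_le_sum fun i hi => mul_le_mul_of_nonneg_left (hρA i hi) (hsA i hi)
    _ = (∑ i ∈ A \ B, s i) * t := (sum_mul ..).symm
    _ ≤ (∑ i ∈ B \ A, s i) * t := mul_le_mul_of_nonneg_right hsum ht
    _ = ∑ i ∈ B \ A, s i * t := sum_mul ..
    _ ≤ ∑ i ∈ B \ A, s i * ρ i :=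
        sum_le_sum fun i hi => mul_le_mul_of_nonneg_left (hρB i hi) (hsB i hi)

theorem chaci_greedy_lemma_general (n r : ℕ) (s ρ : ℕ → ℝ)
    (hs : ∀ i ∈ Finset.Icc 1 n, 0 < s i)
    (hρ : ∀ i ∈ Finset.Icc 1 n, 0 < ρ i)
    (hsorted : ∀ i j : ℕ, 1 ≤ i → i ≤ j → j ≤ n → ρ j ≤ ρ i)
    (J : Finset ℕ) (hJ : J ⊆ Finset.Icc 1 n)
    (hr1 : 1 ≤ r) (hrn : r ≤ n)
    (hhigh : ∑ j ∈ J, s j ≤ ∑ i ∈ Finset.Icc 1 r, s i) :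
    ∑ j ∈ J, s j * ρ j ≤ ∑ i ∈ Finset.Icc 1 r, s i * ρ i := by
  have hprefix : Icc 1 r ⊆ Icc 1 n := Icc_subset_Icc_right hrn
  refine sum_mul_le_sum_mul_of_le_threshold_le (t := ρ r) (hρ r (mem_Icc.2 ⟨hr1, hrn⟩)).le
    (fun j hj => (hs j (hJ (mem_sdiff.1 hj).1)).le)
    (fun i hi => (hs i (hprefix (mem_sdiff.1 hi).1)).le) ?_ ?_ hhigh
  · intro j hj
    obtain ⟨hjJ, hjr⟩ := mem_sdiff.1 hj
    obtain ⟨hj1, hjn⟩ := mem_Icc.1 (hJ hjJ)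
    have hrj : r ≤ j := by
      by_contra! h
      exact hjr (mem_Icc.2 ⟨hj1, h.le⟩)
    exact hsorted r j hr1 hrj hjn
  · intro i hi
    obtain ⟨hi1, hir⟩ := mem_Icc.1 (mem_sdiff.1 hi).1
    exact hsorted i r hi1 hir hrn

/-- CHACI greedy-selection lemma: given items with positive storage costs `s i` and
positive information densities `ρ i` sorted in descending order, any selection `J`
of items whose total storage lies between the greedy prefix sums up to `r-1` and `r`
retains no more total information than the greedy prefix of length `r`. -/
theorem chaci_greedy_lemma (n r : ℕ) (s ρ : ℕ → ℝ)
    (hs : ∀ i ∈ Finset.Icc 1 n, 0 < s i)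
    (hρ : ∀ i ∈ Finset.Icc 1 n, 0 < ρ i)
    (hsorted : ∀ i j : ℕ, 1 ≤ i → i ≤ j → j ≤ n → ρ j ≤ ρ i)
    (J : Finset ℕ) (hJ : J ⊆ Finset.Icc 1 n)
    (hr1 : 1 ≤ r) (hrn : r ≤ n)
    (hlow : ∑ i ∈ Finset.Icc 1 (r - 1), s i < ∑ j ∈ J, s j)
    (hhigh : ∑ j ∈ J, s j ≤ ∑ i ∈ Finset.Icc 1 r, s i) :
    ∑ j ∈ J, s j * ρ j ≤ ∑ i ∈ Finset.Icc 1 r, s i * ρ i :=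
  chaci_greedy_lemma_general n r s ρ hs hρ hsorted J hJ hr1 hrn hhigh
end

section
/- Let (s_1, ρ_1), …, (s_n, ρ_n) be pairs of positive real numbers with ρ_1 ≥ ρ_2 ≥ … ≥ ρ_n, and let t ∈ (0, ∑_{i=1}^n s_i ρ_i]. Suppose indices j_1, …, j_k are distinct and satisfy ∑_{i=1}^k s_{j_i} ρ_{j_i} ≥ t, and let r be the least index with ∑_{i=1}^{r-1} s_i ρ_i < t ≤ ∑_{i=1}^r s_i ρ_i. Then ∑_{i=1}^r s_i − ∑_{i=1}^k s_{j_i} < max_{1 ≤ i ≤ r} s_i. -/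
/-!
Write `w i = s i * ρ i` for the information of item `i` and `P = {1, …, r}` for the greedy
prefix. Since the `ρ i` decrease, items of `P \ J` have density at least `ρ r` and items of
`J \ P` at most `ρ r`; so `ρ r` times the storage excess `∑_P s - ∑_J s` is at most the
information excess `∑_P w - ∑_J w`. As `J` reaches `t` while `{1, …, r - 1}` does not,
`∑_P w - ∑_J w ≤ ∑_P w - t < w r = s r * ρ r`, hence the storage excess is below `s r`.
-/

open Finset

theorem mul_sum_sub_sum_le_sum_mul_sub_sum_mul {ι R : Type*} [DecidableEq ι]
    [CommRing R] [LinearOrder R] [IsStrictOrderedRing R]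
    {A B : Finset ι} {s ρ : ι → R} {ρ₀ : R}
    (hA : ∀ i ∈ A \ B, 0 ≤ s i ∧ ρ₀ ≤ ρ i) (hB : ∀ i ∈ B \ A, 0 ≤ s i ∧ ρ i ≤ ρ₀) :
    ρ₀ * (∑ i ∈ A, s i - ∑ i ∈ B, s i) ≤ ∑ i ∈ A, s i * ρ i - ∑ i ∈ B, s i * ρ i := by
  rw [← sum_sdiff_sub_sum_sdiff (s₁ := B), ← sum_sdiff_sub_sum_sdiff (s₁ := B) (f := fun i => s i * ρ i),
    mul_sub, mul_sum, mul_sum]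
  refine sub_le_sub (sum_le_sum fun i hi => ?_) (sum_le_sum fun i hi => ?_)
  · rw [mul_comm]
    exact mul_le_mul_of_nonneg_left (hA i hi).2 (hA i hi).1
  · rw [mul_comm ρ₀]
    exact mul_le_mul_of_nonneg_left (hB i hi).2 (hB i hi).1

theorem sum_Icc_one_eq_sum_Icc_one_sub_one_add {M : Type*} [AddCommMonoid M]
    {r : ℕ} (hr : 1 ≤ r) (f : ℕ → M) :
    ∑ i ∈ Icc 1 r, f i = ∑ i ∈ Icc 1 (r - 1), f i + f r := by
  obtain ⟨k, rfl⟩ := Nat.exists_eq_add_of_le' hr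
  simp [sum_Icc_succ_top]

theorem chaci_greedy_near_optimal_general (n r : ℕ) (s ρ : ℕ → ℝ)
    (hs : ∀ i ∈ Finset.Icc 1 n, 0 < s i)
    (hρ : ∀ i ∈ Finset.Icc 1 n, 0 < ρ i)
    (hsorted : ∀ i j : ℕ, 1 ≤ i → i ≤ j → j ≤ n → ρ j ≤ ρ i)
    (t : ℝ)
    (J : Finset ℕ) (hJ : J ⊆ Finset.Icc 1 n)
    (hfeas : t ≤ ∑ j ∈ J, s j * ρ j)
    (hr1 : 1 ≤ r) (hrn : r ≤ n)
    (hlow : ∑ i ∈ Finset.Icc 1 (r - 1), s i * ρ i < t) :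
    ∑ i ∈ Finset.Icc 1 r, s i - ∑ j ∈ J, s j <
      (Finset.Icc 1 r).sup' (Finset.nonempty_Icc.mpr hr1) s := by
  have hρr : 0 < ρ r := hρ r (mem_Icc.2 ⟨hr1, hrn⟩)
  have hinfo : ∑ i ∈ Icc 1 r, s i * ρ i - ∑ j ∈ J, s j * ρ j < ρ r * s r := by
    rw [sum_Icc_one_eq_sum_Icc_one_sub_one_add hr1]
    linarith
  have hdensity := mul_sum_sub_sum_le_sum_mul_sub_sum_mul (A := Icc 1 r) (B := J) (s := s)
    (ρ := ρ) (ρ₀ := ρ r)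
    (fun i hi => by
      obtain ⟨⟨hi1, hir⟩, -⟩ : (1 ≤ i ∧ i ≤ r) ∧ i ∉ J := by simpa using hi
      exact ⟨(hs i (mem_Icc.2 ⟨hi1, hir.trans hrn⟩)).le, hsorted i r hi1 hir hrn⟩)
    (fun i hi => by
      obtain ⟨hiJ, hiP⟩ := mem_sdiff.1 hi
      obtain ⟨hi1, hin⟩ := mem_Icc.1 (hJ hiJ)
      have hri : r ≤ i := not_lt.1 fun h => hiP (mem_Icc.2 ⟨hi1, h.le⟩)
      exact ⟨(hs i (hJ hiJ)).le, hsorted r i hr1 hri hin⟩)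
  have hstorage : ∑ i ∈ Icc 1 r, s i - ∑ j ∈ J, s j < s r :=
    lt_of_mul_lt_mul_left (hdensity.trans_lt hinfo) hρr.le
  exact hstorage.trans_le (le_sup' s (right_mem_Icc.2 hr1))

/-- Near-optimality of the CHACI greedy algorithm: any feasible selection `J`
retaining at least `t` total information uses storage within `max_{1 ≤ i ≤ r} s i`
of the greedy prefix storage. -/
theorem chaci_greedy_near_optimal (n r : ℕ) (s ρ : ℕ → ℝ)
    (hs : ∀ i ∈ Finset.Icc 1 n, 0 < s i)
    (hρ : ∀ i ∈ Finset.Icc 1 n, 0 < ρ i)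
    (hsorted : ∀ i j : ℕ, 1 ≤ i → i ≤ j → j ≤ n → ρ j ≤ ρ i)
    (t : ℝ) (ht : 0 < t) (ht' : t ≤ ∑ i ∈ Finset.Icc 1 n, s i * ρ i)
    (J : Finset ℕ) (hJ : J ⊆ Finset.Icc 1 n)
    (hfeas : t ≤ ∑ j ∈ J, s j * ρ j)
    (hr1 : 1 ≤ r) (hrn : r ≤ n)
    (hlow : ∑ i ∈ Finset.Icc 1 (r - 1), s i * ρ i < t)
    (hhigh : t ≤ ∑ i ∈ Finset.Icc 1 r, s i * ρ i)
    (hleast : ∀ r' : ℕ, 1 ≤ r' → r' ≤ n →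
      (∑ i ∈ Finset.Icc 1 (r' - 1), s i * ρ i < t ∧
        t ≤ ∑ i ∈ Finset.Icc 1 r', s i * ρ i) → r ≤ r') :
    ∑ i ∈ Finset.Icc 1 r, s i - ∑ j ∈ J, s j <
      (Finset.Icc 1 r).sup' (Finset.nonempty_Icc.mpr hr1) s :=
  chaci_greedy_near_optimal_general n r s ρ hs hρ hsorted t J hJ hfeas hr1 hrn hlow
end

section
/- Let f, f̂ : (0, S] → ℝ be step functions where f takes value ρ_q on the interval (∑_{i<q} s_i, ∑_{i≤q} s_i] for a descending sequence ρ_1 ≥ … ≥ ρ_r > 0, and f̂ is built the same way from any subsequence (s_{J_1}, ρ_{J_1}), …, (s_{J_m}, ρ_{J_m}) with J_1 < J_2 < … < J_m (extended by 0). Then f(x) ≥ f̂(x) for all x ∈ (0, S]. -/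
/-!
If `x` lies in the `q`-th segment of `f` and the `p`-th segment of `f̂`, then the first `p`
widths of the subsequence are among the first `J p` widths of the full sequence, so
`x ≤ ∑_{i ≤ J p} s_i` forces `q ≤ J p`, whence `ρ_{J p} ≤ ρ_q` by monotonicity. Beyond the
support of `f̂` it vanishes, and `f > 0`.
-/

open Finset

lemma exists_sum_Icc_pred_lt_and_le_sum_Icc (n : ℕ) (a : ℕ → ℝ) {x : ℝ} (hx : 0 < x)
    (hxn : x ≤ ∑ i ∈ Icc 1 n, a i) :
    ∃ q ∈ Icc 1 n, ∑ i ∈ Icc 1 (q - 1), a i < x ∧ x ≤ ∑ i ∈ Icc 1 q, a i := by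
  classical
  have hP : ∃ q, x ≤ ∑ i ∈ Icc 1 q, a i := ⟨n, hxn⟩
  have hq_pos : 1 ≤ Nat.find hP := by
    by_contra h
    have hle := Nat.find_spec hP
    rw [Nat.lt_one_iff.mp (not_le.mp h)] at hle
    exact hx.not_ge (by simpa using hle)
  refine ⟨Nat.find hP, mem_Icc.mpr ⟨hq_pos, Nat.find_le hxn⟩, ?_, Nat.find_spec hP⟩
  exact not_le.mp (Nat.find_min hP (by omega))

lemma lt_of_sum_Icc_lt_sum_Icc {a : ℕ → ℝ} {k n : ℕ} (ha : ∀ i ∈ Icc 1 k, 0 ≤ a i)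
    (h : ∑ i ∈ Icc 1 k, a i < ∑ i ∈ Icc 1 n, a i) : k < n := by
  by_contra! hnk
  exact h.not_ge <| sum_le_sum_of_subset_of_nonneg (Icc_subset_Icc le_rfl hnk)
    fun i hi _ => ha i hi

lemma sum_Icc_comp_le_sum_Icc {a : ℕ → ℝ} {J : ℕ → ℕ} {p : ℕ}
    (hJ : StrictMonoOn J (Set.Icc 1 p)) (hJ_pos : ∀ i ∈ Icc 1 p, 1 ≤ J i)
    (ha : ∀ j ∈ Icc 1 (J p), 0 ≤ a j) :
    ∑ i ∈ Icc 1 p, a (J i) ≤ ∑ j ∈ Icc 1 (J p), a j := by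
  classical
  have hsub : (Icc 1 p).image J ⊆ Icc 1 (J p) := by
    rintro _ hj
    obtain ⟨i, hi, rfl⟩ := mem_image.mp hj
    have hi' := mem_Icc.mp hi
    exact mem_Icc.mpr ⟨hJ_pos i hi,
      hJ.monotoneOn hi' ⟨hi'.1.trans hi'.2, le_rfl⟩ hi'.2⟩
  rw [← sum_image fun i hi j hj => hJ.injOn (by simpa using hi) (by simpa using hj)]
  exact sum_le_sum_of_subset_of_nonneg hsub fun j hj _ => ha j hj

theorem chaci_step_function_domination_general (r m : ℕ) (s ρ : ℕ → ℝ)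
    (hs : ∀ i ∈ Finset.Icc 1 r, 0 < s i)
    (hρpos : ∀ i ∈ Finset.Icc 1 r, 0 < ρ i)
    (hsorted : ∀ i j : ℕ, 1 ≤ i → i ≤ j → j ≤ r → ρ j ≤ ρ i)
    (J : ℕ → ℕ)
    (hJmono : ∀ i j : ℕ, 1 ≤ i → i < j → j ≤ m → J i < J j)
    (hJrange : ∀ i ∈ Finset.Icc 1 m, J i ∈ Finset.Icc 1 r)
    (f fhat : ℝ → ℝ)
    (hf : ∀ q ∈ Finset.Icc 1 r, ∀ x : ℝ,
      ∑ i ∈ Finset.Icc 1 (q - 1), s i < x → x ≤ ∑ i ∈ Finset.Icc 1 q, s i →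
        f x = ρ q)
    (hfhat : ∀ q ∈ Finset.Icc 1 m, ∀ x : ℝ,
      ∑ i ∈ Finset.Icc 1 (q - 1), s (J i) < x → x ≤ ∑ i ∈ Finset.Icc 1 q, s (J i) →
        fhat x = ρ (J q))
    (hfhat0 : ∀ x : ℝ, ∑ i ∈ Finset.Icc 1 m, s (J i) < x → fhat x = 0) :
    ∀ x : ℝ, 0 < x → x ≤ ∑ i ∈ Finset.Icc 1 r, s i → fhat x ≤ f x := by
  intro x hx hxS
  have hs_nonneg : ∀ n ≤ r, ∀ i ∈ Icc 1 n, 0 ≤ s i := fun n hn i hi =>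
    (hs i (Icc_subset_Icc le_rfl hn hi)).le
  obtain ⟨q, hq, hq_lt, hq_le⟩ := exists_sum_Icc_pred_lt_and_le_sum_Icc r s hx hxS
  rw [hf q hq x hq_lt hq_le]
  by_cases hxm : x ≤ ∑ i ∈ Icc 1 m, s (J i)
  · obtain ⟨p, hp, hp_lt, hp_le⟩ :=
      exists_sum_Icc_pred_lt_and_le_sum_Icc m (fun i => s (J i)) hx hxm
    rw [hfhat p hp x hp_lt hp_le]
    have hJp_le : J p ≤ r := (mem_Icc.mp (hJrange p hp)).2
    have hJ_mono : StrictMonoOn J (Set.Icc 1 p) := fun i hi j hj hij =>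
      hJmono i j hi.1 hij (hj.2.trans (mem_Icc.mp hp).2)
    have hJ_pos : ∀ i ∈ Icc 1 p, 1 ≤ J i := fun i hi =>
      (mem_Icc.mp (hJrange i (Icc_subset_Icc le_rfl (mem_Icc.mp hp).2 hi))).1
    have hq_pred_lt : q - 1 < J p :=
      lt_of_sum_Icc_lt_sum_Icc (hs_nonneg _ ((q.sub_le 1).trans (mem_Icc.mp hq).2)) <| hq_lt.trans_le <| hp_le.trans <| sum_Icc_comp_le_sum_Icc hJ_mono hJ_pos (hs_nonneg _ hJp_le)
    exact hsorted q (J p) (mem_Icc.mp hq).1 (by omega) hJp_le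
  · rw [hfhat0 x (not_le.mp hxm)]
    exact (hρpos q hq).le

/-- Pointwise domination of step functions: the step function `f` built from a
descending sequence `ρ_1 ≥ … ≥ ρ_r > 0` with segment widths `s_1, …, s_r` pointwise
dominates, on `(0, S]`, the step function `f̂` built in the same way from any
subsequence `(s_{J_1}, ρ_{J_1}), …, (s_{J_m}, ρ_{J_m})` (with `J` strictly
increasing), extended by `0`. -/
theorem chaci_step_function_domination (r m : ℕ) (s ρ : ℕ → ℝ)
    (hs : ∀ i ∈ Finset.Icc 1 r, 0 < s i)
    (hρpos : ∀ i ∈ Finset.Icc 1 r, 0 < ρ i)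
    (hsorted : ∀ i j : ℕ, 1 ≤ i → i ≤ j → j ≤ r → ρ j ≤ ρ i)
    (J : ℕ → ℕ) (hmr : m ≤ r)
    (hJmono : ∀ i j : ℕ, 1 ≤ i → i < j → j ≤ m → J i < J j)
    (hJrange : ∀ i ∈ Finset.Icc 1 m, J i ∈ Finset.Icc 1 r)
    (f fhat : ℝ → ℝ)
    (hf : ∀ q ∈ Finset.Icc 1 r, ∀ x : ℝ,
      ∑ i ∈ Finset.Icc 1 (q - 1), s i < x → x ≤ ∑ i ∈ Finset.Icc 1 q, s i →
        f x = ρ q)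
    (hfhat : ∀ q ∈ Finset.Icc 1 m, ∀ x : ℝ,
      ∑ i ∈ Finset.Icc 1 (q - 1), s (J i) < x → x ≤ ∑ i ∈ Finset.Icc 1 q, s (J i) →
        fhat x = ρ (J q))
    (hfhat0 : ∀ x : ℝ, ∑ i ∈ Finset.Icc 1 m, s (J i) < x → fhat x = 0) :
    ∀ x : ℝ, 0 < x → x ≤ ∑ i ∈ Finset.Icc 1 r, s i → fhat x ≤ f x :=
  chaci_step_function_domination_general r m s ρ hs hρpos hsorted J hJmono hJrange f fhat hf hfhat
    hfhat0
end
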